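/- Let N_1,...,N_n be i.i.d. Laplace random variables with scale b > 0, and Y_n = ∑_{i=1}^n N_i. If v ≥ b√n and 0 ≤ λ ≤ 2√2·v²/b, then P(Y_n ≥ λ) ≤ exp(-λ²/(8v²)). -/

import Mathlib

/-!
Chernoff's method with `t = λ / (4 v²)`. A Laplace(b) variable has moment generating function
`(1 - b²t²)⁻¹` for `|t| < 1/b`, and `(1 - x)⁻¹ ≤ exp (2x)` for `0 ≤ x ≤ 1/2`; the hypothesis
`λ ≤ 2√2 v²/b` is exactly `b²t² ≤ 1/2`. By independence the sum has mgf at most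
`exp (2 n b² t²) ≤ exp (2 v² t²)`, and `exp (-t λ + 2 v² t²) = exp (-λ² / (8 v²))`.
-/

open MeasureTheory Finset

/-- The Laplace distribution with scale `b`, given by density
`(1/(2b)) * exp (-|x|/b)` with respect to Lebesgue measure. -/
noncomputable def laplaceMeasure (b : ℝ) : Measure ℝ :=
  volume.withDensity (fun x => ENNReal.ofReal ((1 / (2 * b)) * Real.exp (-|x| / b)))

open Real Set

section TwoSidedExponential

variable {b t : ℝ}

lemma exp_mul_sub_abs_div_of_nonpos {x : ℝ} (hx : x ≤ 0) :
    exp (t * x - |x| / b) = exp ((t + b⁻¹) * x) := by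
  rw [abs_of_nonpos hx]; ring_nf

lemma exp_mul_sub_abs_div_of_pos {x : ℝ} (hx : 0 < x) :
    exp (t * x - |x| / b) = exp ((t - b⁻¹) * x) := by
  rw [abs_of_pos hx]; ring_nf

lemma integrableOn_exp_mul_sub_abs_div_Iic (ht : |t| < b⁻¹) :
    IntegrableOn (fun x => exp (t * x - |x| / b)) (Iic 0) :=
  (integrableOn_exp_mul_Iic (by linarith [neg_abs_le t]) 0).congr_fun
    (fun _ hx => (exp_mul_sub_abs_div_of_nonpos hx).symm) measurableSet_Iic

lemma integrableOn_exp_mul_sub_abs_div_Ioi (ht : |t| < b⁻¹) :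
    IntegrableOn (fun x => exp (t * x - |x| / b)) (Ioi 0) :=
  (integrableOn_exp_mul_Ioi (by linarith [le_abs_self t]) 0).congr_fun
    (fun _ hx => (exp_mul_sub_abs_div_of_pos hx).symm) measurableSet_Ioi

lemma integrable_exp_mul_sub_abs_div (ht : |t| < b⁻¹) :
    Integrable (fun x => exp (t * x - |x| / b)) := by
  have h := (integrableOn_exp_mul_sub_abs_div_Iic ht).union
    (integrableOn_exp_mul_sub_abs_div_Ioi ht)
  rwa [Iic_union_Ioi, integrableOn_univ] at h

lemma integral_exp_mul_sub_abs_div (ht : |t| < b⁻¹) :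
    ∫ x, exp (t * x - |x| / b) = (b⁻¹ + t)⁻¹ + (b⁻¹ - t)⁻¹ := by
  rw [← intervalIntegral.integral_Iic_add_Ioi (integrableOn_exp_mul_sub_abs_div_Iic ht)
    (integrableOn_exp_mul_sub_abs_div_Ioi ht),
    setIntegral_congr_fun measurableSet_Iic fun _ hx => exp_mul_sub_abs_div_of_nonpos hx,
    setIntegral_congr_fun measurableSet_Ioi fun _ hx => exp_mul_sub_abs_div_of_pos hx,
    integral_exp_mul_Iic (by linarith [neg_abs_le t]),
    integral_exp_mul_Ioi (by linarith [le_abs_self t])]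
  simp only [mul_zero, exp_zero]
  rw [← neg_sub, div_neg, neg_div, neg_neg, one_div, one_div, add_comm t]

end TwoSidedExponential

section Laplace

open ProbabilityTheory

variable {b t : ℝ}

lemma coe_toNNReal_laplace_density (hb : 0 ≤ b) (x : ℝ) :
    (((1 / (2 * b)) * exp (-|x| / b)).toNNReal : ℝ) = (1 / (2 * b)) * exp (-|x| / b) :=
  Real.coe_toNNReal _ (by positivity)

lemma laplaceMeasure_eq_withDensity_coe :
    laplaceMeasure b =
      volume.withDensity fun x => (((1 / (2 * b)) * exp (-|x| / b)).toNNReal : ENNReal) :=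
  rfl

lemma integrable_laplaceMeasure_iff (hb : 0 ≤ b) {g : ℝ → ℝ} :
    Integrable g (laplaceMeasure b) ↔
      Integrable fun x => (1 / (2 * b)) * exp (-|x| / b) * g x := by
  rw [laplaceMeasure_eq_withDensity_coe, integrable_withDensity_iff_integrable_smul (by fun_prop)]
  simp only [NNReal.smul_def, smul_eq_mul, coe_toNNReal_laplace_density hb]

lemma integral_laplaceMeasure (hb : 0 ≤ b) (g : ℝ → ℝ) :
    ∫ x, g x ∂laplaceMeasure b = ∫ x, (1 / (2 * b)) * exp (-|x| / b) * g x := by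
  rw [laplaceMeasure_eq_withDensity_coe, integral_withDensity_eq_integral_smul (by fun_prop)]
  simp only [NNReal.smul_def, smul_eq_mul, coe_toNNReal_laplace_density hb]

lemma integrable_exp_mul_laplaceMeasure (ht : |t| < b⁻¹) :
    Integrable (fun x => exp (t * x)) (laplaceMeasure b) := by
  have hb : 0 < b := inv_pos.mp ((abs_nonneg t).trans_lt ht)
  rw [integrable_laplaceMeasure_iff hb.le]
  refine ((integrable_exp_mul_sub_abs_div ht).const_mul (1 / (2 * b))).congr
    (ae_of_all _ fun x => ?_)
  simp only [mul_assoc, ← exp_add]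
  ring_nf

lemma mgf_id_laplaceMeasure (ht : |t| < b⁻¹) :
    mgf id (laplaceMeasure b) t = (1 - (b * t) ^ 2)⁻¹ := by
  have hb : 0 < b := inv_pos.mp ((abs_nonneg t).trans_lt ht)
  obtain ⟨hlo, hhi⟩ := abs_lt.mp ht
  have hplus : 0 < 1 + b * t := by nlinarith [mul_inv_cancel₀ hb.ne']
  have hminus : 0 < 1 - b * t := by nlinarith [mul_inv_cancel₀ hb.ne']
  have hsq : 1 - b ^ 2 * t ^ 2 ≠ 0 := by nlinarith
  calc mgf id (laplaceMeasure b) t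
      = ∫ x, 1 / (2 * b) * exp (t * x - |x| / b) := by
        rw [mgf, integral_laplaceMeasure hb.le]
        congr 1 with x
        simp only [id, mul_assoc, ← exp_add]
        ring_nf
    _ = 1 / (2 * b) * ((b⁻¹ + t)⁻¹ + (b⁻¹ - t)⁻¹) := by
        rw [integral_const_mul, integral_exp_mul_sub_abs_div ht]
    _ = (1 - (b * t) ^ 2)⁻¹ := by
        rw [mul_pow]
        field_simp
        ring

end Laplace

lemma inv_one_sub_le_exp_two_mul {x : ℝ} (hx0 : 0 ≤ x) (hx : x ≤ 1 / 2) :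
    (1 - x)⁻¹ ≤ exp (2 * x) := by
  rw [inv_le_iff_one_le_mul₀ (by linarith)]
  nlinarith [add_one_le_exp (2 * x)]

section IndependentLaplace

open ProbabilityTheory

variable {Ω ι : Type*} [MeasurableSpace Ω] {μ : Measure Ω} {b t : ℝ}

lemma mgf_eq_of_map_eq_laplaceMeasure {Y : Ω → ℝ} (hY : AEMeasurable Y μ)
    (hlaw : μ.map Y = laplaceMeasure b) (ht : |t| < b⁻¹) :
    mgf Y μ t = (1 - (b * t) ^ 2)⁻¹ := by
  rw [← mgf_id_map hY, hlaw, mgf_id_laplaceMeasure ht]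

lemma integrable_exp_mul_of_map_eq_laplaceMeasure {Y : Ω → ℝ} (hY : AEMeasurable Y μ)
    (hlaw : μ.map Y = laplaceMeasure b) (ht : |t| < b⁻¹) :
    Integrable (fun ω => exp (t * Y ω)) μ := by
  have h := integrable_exp_mul_laplaceMeasure ht
  rw [← hlaw] at h
  exact (integrable_map_measure h.aestronglyMeasurable hY).mp h

variable [Fintype ι] {X : ι → Ω → ℝ}

lemma measureReal_sum_ge_le_of_laplace (hindep : iIndepFun X μ) (hmeas : ∀ i, Measurable (X i))
    (hlaw : ∀ i, μ.map (X i) = laplaceMeasure b) (ht0 : 0 ≤ t) (ht : |t| < b⁻¹) (ε : ℝ) :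
    μ.real {ω | ε ≤ ∑ i, X i ω} ≤ exp (-t * ε) * (1 - (b * t) ^ 2)⁻¹ ^ Fintype.card ι := by
  have := hindep.isProbabilityMeasure
  have hint : Integrable (fun ω => exp (t * (∑ i, X i) ω)) μ :=
    hindep.integrable_exp_mul_sum hmeas fun i _ =>
      integrable_exp_mul_of_map_eq_laplaceMeasure (hmeas i).aemeasurable (hlaw i) ht
  have hmgf : mgf (∑ i, X i) μ t = (1 - (b * t) ^ 2)⁻¹ ^ Fintype.card ι := by
    rw [hindep.mgf_sum hmeas, Finset.prod_congr rfl fun i _ =>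
      mgf_eq_of_map_eq_laplaceMeasure (hmeas i).aemeasurable (hlaw i) ht]
    simp
  simpa only [Finset.sum_apply, hmgf] using measure_ge_le_exp_mul_mgf ε ht0 hint

end IndependentLaplace

lemma sq_mul_div_le_half {b v lam : ℝ} (hb : 0 < b) (hlam0 : 0 ≤ lam)
    (hlam : lam ≤ 2 * √2 * v ^ 2 / b) : (b * (lam / (4 * v ^ 2))) ^ 2 ≤ 1 / 2 := by
  rcases (sq_nonneg v).eq_or_lt with hv | hv
  · simp [← hv]
  have hbt : b * (lam / (4 * v ^ 2)) ≤ √2 / 2 := by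
    rw [← mul_div_assoc, div_le_iff₀ (by positivity)]
    rw [le_div_iff₀ hb] at hlam
    linarith
  calc (b * (lam / (4 * v ^ 2))) ^ 2 ≤ (√2 / 2) ^ 2 := by gcongr
    _ = 1 / 2 := by rw [div_pow, sq_sqrt zero_le_two]; norm_num

/-- `t = λ / (4 v²)` minimises the Chernoff exponent `-t λ + 2 v² t²`. -/
lemma neg_mul_add_two_mul_sq_eq (lam v : ℝ) :
    -(lam / (4 * v ^ 2)) * lam + 2 * v ^ 2 * (lam / (4 * v ^ 2)) ^ 2 = -lam ^ 2 / (8 * v ^ 2) := by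
  rcases eq_or_ne v 0 with rfl | hv
  · simp
  field_simp
  ring

theorem laplace_sum_tail_bound_general {Ω : Type*} [MeasurableSpace Ω]
    (ℙ : Measure Ω)
    (n : ℕ) (N : Fin n → Ω → ℝ) (hmeas : ∀ i, Measurable (N i))
    (b : ℝ) (hb : 0 < b)
    (hindep : ProbabilityTheory.iIndepFun N ℙ)
    (hlaw : ∀ i, Measure.map (N i) ℙ = laplaceMeasure b)
    (v lam : ℝ) (hv : b * Real.sqrt n ≤ v)
    (hlam0 : 0 ≤ lam) (hlam : lam ≤ 2 * Real.sqrt 2 * v ^ 2 / b) :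
    ℙ {ω | (∑ i, N i ω) ≥ lam} ≤ ENNReal.ofReal (Real.exp (-lam ^ 2 / (8 * v ^ 2))) := by
  have := hindep.isProbabilityMeasure
  set t := lam / (4 * v ^ 2)
  have hnb : b ^ 2 * n ≤ v ^ 2 := by
    simpa [mul_pow, Nat.cast_nonneg] using pow_le_pow_left₀ (by positivity) hv 2
  have hbt : (b * t) ^ 2 ≤ 1 / 2 := sq_mul_div_le_half hb hlam0 hlam
  have ht : |t| < b⁻¹ := by
    rw [abs_of_nonneg (by positivity), ← one_div, lt_div_iff₀' hb]
    nlinarith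
  rw [← ofReal_measureReal]
  gcongr
  calc ℙ.real {ω | lam ≤ ∑ i, N i ω}
      ≤ exp (-t * lam) * (1 - (b * t) ^ 2)⁻¹ ^ n := by
        simpa using measureReal_sum_ge_le_of_laplace hindep hmeas hlaw (by positivity) ht lam
    _ ≤ exp (-t * lam) * exp (2 * (b * t) ^ 2) ^ n := by
        gcongr
        · exact inv_nonneg.mpr (by linarith)
        · exact inv_one_sub_le_exp_two_mul (sq_nonneg _) hbt
    _ = exp (-t * lam + 2 * (b ^ 2 * n) * t ^ 2) := by
        rw [← exp_nat_mul, ← exp_add]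
        ring_nf
    _ ≤ exp (-t * lam + 2 * v ^ 2 * t ^ 2) := by gcongr
    _ = exp (-lam ^ 2 / (8 * v ^ 2)) := by rw [neg_mul_add_two_mul_sq_eq]

/-- Concentration for sums of i.i.d. Laplace(b) variables: if `v ≥ b√n` and
`0 ≤ λ ≤ 2√2 v²/b`, then `P(∑ N_i ≥ λ) ≤ exp(-λ²/(8v²))`. -/
theorem laplace_sum_tail_bound {Ω : Type*} [MeasurableSpace Ω]
    (ℙ : Measure Ω) [IsProbabilityMeasure ℙ]
    (n : ℕ) (N : Fin n → Ω → ℝ) (hmeas : ∀ i, Measurable (N i))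
    (b : ℝ) (hb : 0 < b)
    (hindep : ProbabilityTheory.iIndepFun N ℙ)
    (hlaw : ∀ i, Measure.map (N i) ℙ = laplaceMeasure b)
    (v lam : ℝ) (hv : b * Real.sqrt n ≤ v)
    (hlam0 : 0 ≤ lam) (hlam : lam ≤ 2 * Real.sqrt 2 * v ^ 2 / b) :
    ℙ {ω | (∑ i, N i ω) ≥ lam} ≤ ENNReal.ofReal (Real.exp (-lam ^ 2 / (8 * v ^ 2))) :=
  laplace_sum_tail_bound_general ℙ n N hmeas b hb hindep hlaw v lam hv hlam0 hlam
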